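/- arXiv:2412.08219 — 2 statements merged into one kernel-verified Lean document; each statement's English description precedes it below -/
import Mathlib

section
/- Let 0 ≤ L_τ < 1, let τ₁, τ₂ : [0,1] → ℝ, and suppose τ₂ satisfies |τ₂(q₁) − τ₂(q₂)| ≤ L_τ|q₁ − q₂| for all q₁, q₂ ∈ [0,1]. Assume τ₁(1) ≥ 1 and let q* ∈ [0,1] satisfy q* − τ₂(q*) = 0. Then 0 ≤ 1 − q* ≤ ‖τ₁ − τ₂‖∞ / (1 − L_τ). -/
open Set

/-- If τ₂ is Lipschitz with constant 0 ≤ L_τ < 1 on [0,1], τ₁(1) ≥ 1, and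
q* ∈ [0,1] satisfies q* − τ₂(q*) = 0, then 0 ≤ 1 − q* ≤ ‖τ₁ − τ₂‖∞/(1 − L_τ).  The sup norm
‖τ₁ − τ₂‖∞ is rendered by an arbitrary uniform bound M of |τ₁ − τ₂| on [0,1]. -/
theorem stmt_3 (Lτ : ℝ) (hL0 : 0 ≤ Lτ) (hL1 : Lτ < 1) (τ₁ τ₂ : ℝ → ℝ)
    (hlip : ∀ q₁ ∈ Icc (0:ℝ) 1, ∀ q₂ ∈ Icc (0:ℝ) 1, |τ₂ q₁ - τ₂ q₂| ≤ Lτ * |q₁ - q₂|)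
    (hτ₁ : 1 ≤ τ₁ 1)
    (M : ℝ) (hM : ∀ q ∈ Icc (0:ℝ) 1, |τ₁ q - τ₂ q| ≤ M)
    (qs : ℝ) (hqs : qs ∈ Icc (0:ℝ) 1) (heq : qs - τ₂ qs = 0) :
    0 ≤ 1 - qs ∧ 1 - qs ≤ M / (1 - Lτ) := by
  obtain ⟨h0, h1⟩ := hqs
  have h1' : (1:ℝ) ∈ Icc (0:ℝ) 1 := ⟨by norm_num, le_refl 1⟩
  have hA : τ₁ 1 - τ₂ 1 ≤ M := (abs_le.mp (hM 1 h1')).2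
  have hB : |τ₂ 1 - τ₂ qs| ≤ Lτ * |1 - qs| := hlip 1 h1' qs ⟨h0, h1⟩
  have habs : |1 - qs| = 1 - qs := abs_of_nonneg (by linarith)
  rw [habs] at hB
  have hB' : τ₂ 1 - τ₂ qs ≤ Lτ * (1 - qs) := le_trans (le_abs_self _) hB
  have key : (1 - Lτ) * (1 - qs) ≤ M := by nlinarith
  refine ⟨by linarith, ?_⟩
  rw [le_div_iff₀ (by linarith : (0:ℝ) < 1 - Lτ)]
  nlinarith
end

section
/- For every choice of constants c̄ ≥ 0, L_c ≥ 0, L_{τ′} ≥ 0, L_B ≥ 0 and τ̄′ ∈ [0,1), there exists a constant L_F > 0 (depending only on c̄, L_c, L_{τ′}, L_B, τ̄′) with the following property: whenever c : [0,1] → ℝ satisfies |c(p)| ≤ c̄ for all p and |c(p₁) − c(p₂)| ≤ L_c|p₁ − p₂| for all p₁, p₂ ∈ [0,1]; whenever τ₁, τ₂ : [0,1] → ℝ are differentiable with |τᵢ′(q)| ≤ τ̄′ for all q ∈ [0,1] and |τᵢ′(q₁) − τᵢ′(q₂)| ≤ L_{τ′}|q₁ − q₂| for all q₁, q₂ ∈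 [0,1] (i = 1,2), and sup_{q∈[0,1]}|τ₁′(q) − τ₂′(q)| ≤ L_B‖τ₁ − τ₂‖∞; then for all p₁, p₂ ∈ [0,1] with p₁ − τ₁(p₁) = p₂ − τ₂(p₂), one has |c(p₁)/(1 − τ₁′(p₁)) − c(p₂)/(1 − τ₂′(p₂))| ≤ L_F‖τ₁ − τ₂‖∞. -/
open Set

/-- For every choice of constants c̄, L_c, L_{τ′}, L_B ≥ 0 and τ̄′ ∈ [0,1)
there is a constant L_F > 0 such that for all admissible c, τ₁, τ₂ and all p₁, p₂ ∈ [0,1]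
with p₁ − τ₁(p₁) = p₂ − τ₂(p₂) one has
|c(p₁)/(1 − τ₁′(p₁)) − c(p₂)/(1 − τ₂′(p₂))| ≤ L_F‖τ₁ − τ₂‖∞.
The sup norm ‖τ₁ − τ₂‖∞ is rendered by an arbitrary uniform bound M of |τ₁ − τ₂| on [0,1]. -/
theorem stmt_4 (cbar Lc Lτ' LB τ'bar : ℝ)
    (hcbar : 0 ≤ cbar) (hLc : 0 ≤ Lc) (hLτ' : 0 ≤ Lτ') (hLB : 0 ≤ LB)
    (hτ'0 : 0 ≤ τ'bar) (hτ'1 : τ'bar < 1) :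
    ∃ L_F > 0, ∀ (c τ₁ τ₂ τ₁' τ₂' : ℝ → ℝ) (M : ℝ),
      (∀ p ∈ Icc (0:ℝ) 1, |c p| ≤ cbar) →
      (∀ p₁ ∈ Icc (0:ℝ) 1, ∀ p₂ ∈ Icc (0:ℝ) 1, |c p₁ - c p₂| ≤ Lc * |p₁ - p₂|) →
      (∀ q ∈ Icc (0:ℝ) 1, HasDerivWithinAt τ₁ (τ₁' q) (Icc (0:ℝ) 1) q) →
      (∀ q ∈ Icc (0:ℝ) 1, HasDerivWithinAt τ₂ (τ₂' q) (Icc (0:ℝ) 1) q) →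
      (∀ q ∈ Icc (0:ℝ) 1, |τ₁' q| ≤ τ'bar) →
      (∀ q ∈ Icc (0:ℝ) 1, |τ₂' q| ≤ τ'bar) →
      (∀ q₁ ∈ Icc (0:ℝ) 1, ∀ q₂ ∈ Icc (0:ℝ) 1, |τ₁' q₁ - τ₁' q₂| ≤ Lτ' * |q₁ - q₂|) →
      (∀ q₁ ∈ Icc (0:ℝ) 1, ∀ q₂ ∈ Icc (0:ℝ) 1, |τ₂' q₁ - τ₂' q₂| ≤ Lτ' * |q₁ - q₂|) →
      (∀ q ∈ Icc (0:ℝ) 1, |τ₁ q - τ₂ q| ≤ M) →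
      (∀ q ∈ Icc (0:ℝ) 1, |τ₁' q - τ₂' q| ≤ LB * M) →
      ∀ p₁ ∈ Icc (0:ℝ) 1, ∀ p₂ ∈ Icc (0:ℝ) 1,
        p₁ - τ₁ p₁ = p₂ - τ₂ p₂ →
        |c p₁ / (1 - τ₁' p₁) - c p₂ / (1 - τ₂' p₂)| ≤ L_F * M := by

  set δ := 1 - τ'bar with hδdef
  have hδ : 0 < δ := by simp only [hδdef]; linarith
  refine ⟨Lc/δ^2 + cbar*Lτ'/δ^3 + cbar*LB/δ^2 + 1, by positivity, ?_⟩
  intro c τ₁ τ₂ τ₁' τ₂' M hc hcL hd1 hd2 hb1 hb2 hl1 hl2 hM hM' p₁ hp₁ p₂ hp₂ heq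
  have h0 : (0:ℝ) ∈ Icc (0:ℝ) 1 := by constructor <;> norm_num
  have hM0 : 0 ≤ M := le_trans (abs_nonneg _) (hM 0 h0)
  -- bounds on denominators
  have hx : δ ≤ 1 - τ₁' p₁ := by
    have := (abs_le.mp (hb1 p₁ hp₁)).2; simp only [hδdef]; linarith
  have hy : δ ≤ 1 - τ₂' p₂ := by
    have := (abs_le.mp (hb2 p₂ hp₂)).2; simp only [hδdef]; linarith
  have hxpos : 0 < 1 - τ₁' p₁ := lt_of_lt_of_le hδ hx
  have hypos : 0 < 1 - τ₂' p₂ := lt_of_lt_of_le hδ hy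
  -- |p₁ - p₂| ≤ M / δ
  have hτ1lip : |τ₁ p₁ - τ₁ p₂| ≤ τ'bar * |p₁ - p₂| := by
    have := (convex_Icc (0:ℝ) 1).norm_image_sub_le_of_norm_hasDerivWithin_le
      hd1 (fun q hq => by simpa using hb1 q hq) hp₂ hp₁
    simpa [Real.norm_eq_abs] using this
  have hpp : |p₁ - p₂| ≤ M / δ := by
    have h1 : p₁ - p₂ = (τ₁ p₁ - τ₁ p₂) + (τ₁ p₂ - τ₂ p₂) := by linarith
    have h2 : |p₁ - p₂| ≤ |τ₁ p₁ - τ₁ p₂| + |τ₁ p₂ - τ₂ p₂| := h1 ▸ abs_add_le _ _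
    have h3 := hM p₂ hp₂
    rw [le_div_iff₀ hδ]
    simp only [hδdef]
    nlinarith [abs_nonneg (p₁ - p₂)]
  -- decomposition
  set a := c p₁; set b := c p₂; set x := 1 - τ₁' p₁; set y := 1 - τ₂' p₂
  have hkey : a/x - b/y = (a-b)/x + b*(y-x)/(x*y) := by
    field_simp
    ring
  have hterm1 : |(a-b)/x| ≤ (Lc * (M/δ)) / δ := by
    rw [abs_div, abs_of_pos hxpos]
    apply div_le_div₀ (by positivity) _ hδ hx
    calc |a - b| ≤ Lc * |p₁ - p₂| := hcL p₁ hp₁ p₂ hp₂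
      _ ≤ Lc * (M/δ) := by apply mul_le_mul_of_nonneg_left hpp hLc
  have hyx : |y - x| ≤ Lτ' * (M/δ) + LB * M := by
    have h1 : y - x = (τ₁' p₁ - τ₁' p₂) + (τ₁' p₂ - τ₂' p₂) := by
      simp only [x, y]; ring
    have h2 : |y - x| ≤ |τ₁' p₁ - τ₁' p₂| + |τ₁' p₂ - τ₂' p₂| := h1 ▸ abs_add_le _ _
    have h3 := hl1 p₁ hp₁ p₂ hp₂
    have h4 := hM' p₂ hp₂
    have h5 : Lτ' * |p₁ - p₂| ≤ Lτ' * (M/δ) := mul_le_mul_of_nonneg_left hpp hLτ'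
    linarith
  have hterm2 : |b*(y-x)/(x*y)| ≤ cbar * (Lτ' * (M/δ) + LB * M) / (δ*δ) := by
    rw [abs_div, abs_mul, abs_of_pos (mul_pos hxpos hypos)]
    apply div_le_div₀ _ _ (by positivity) (mul_le_mul hx hy (le_of_lt hδ) (by positivity))
    · positivity
    · exact mul_le_mul (hc p₂ hp₂) hyx (abs_nonneg _) hcbar
  have hsum : |a/x - b/y| ≤ (Lc * (M/δ)) / δ + cbar * (Lτ' * (M/δ) + LB * M) / (δ*δ) := by
    rw [hkey]
    exact le_trans (abs_add_le _ _) (add_le_add hterm1 hterm2)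
  have hfinal : (Lc * (M/δ)) / δ + cbar * (Lτ' * (M/δ) + LB * M) / (δ*δ)
      ≤ (Lc/δ^2 + cbar*Lτ'/δ^3 + cbar*LB/δ^2 + 1) * M := by
    have heq2 : (Lc * (M/δ)) / δ + cbar * (Lτ' * (M/δ) + LB * M) / (δ*δ)
        = (Lc/δ^2 + cbar*Lτ'/δ^3 + cbar*LB/δ^2) * M := by
      field_simp
      ring
    rw [heq2]
    nlinarith
  linarith
end
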